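/- The inverse Mills ratio 𝒜 is differentiable on ℝ with 𝒜′(x) = 𝒜(x)² − x·𝒜(x), and 0 ≤ 𝒜′(x) ≤ 1 for all x ∈ ℝ. (Lemma 4.4, items (iii) and (iv); the upper bound 𝒜′ ≤ 1 is equivalent to the nonnegativity of the conditional variance Var(Z | Z ≥ x).) -/

import Mathlib

/-!
Write `φ` for the standard normal density, so that `𝒜 = φ / 𝒩`, `φ' = -x φ` and `𝒩' = -φ`;
the quotient rule gives `𝒜' = 𝒜² - x 𝒜 = 𝒜 (𝒜 - x)`. Integrating by parts,
`∫_x^∞ t φ = φ(x)` and `∫_x^∞ t² φ = x φ(x) + 𝒩(x)`, i.e. `E[Z | Z ≥ x] = 𝒜(x)` and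
`E[Z² | Z ≥ x] = 1 + x 𝒜(x)`. The first gives `𝒜 ≥ x`, hence `𝒜' ≥ 0`; Cauchy–Schwarz for the
conditional law, `Var(Z | Z ≥ x) = 1 + x 𝒜 - 𝒜² ≥ 0`, gives `𝒜' ≤ 1`.
-/

open MeasureTheory ProbabilityTheory

/-- The standard Gaussian measure on `ℝ`. -/
noncomputable def stdGauss : Measure ℝ := gaussianReal 0 1

/-- The Gaussian tail function `𝒩(x) = P(Z ≥ x)`. -/
noncomputable def gaussTail (x : ℝ) : ℝ := (stdGauss (Set.Ici x)).toReal

/-- The inverse Mills ratio `𝒜(x) = e^{-x²/2} / (√(2π)·𝒩(x))`. -/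
noncomputable def invMills (x : ℝ) : ℝ :=
  Real.exp (-x ^ 2 / 2) / (Real.sqrt (2 * Real.pi) * gaussTail x)

open Filter Set Topology

lemma sq_integral_mul_le_integral_mul_integral {α : Type*} [MeasurableSpace α]
    {μ : Measure α} {f g : α → ℝ} (hf : 0 ≤ᵐ[μ] f) (hf_int : Integrable f μ)
    (hgf_int : Integrable (fun a => g a * f a) μ)
    (hg2f_int : Integrable (fun a => g a ^ 2 * f a) μ) :
    (∫ a, g a * f a ∂μ) ^ 2 ≤ (∫ a, g a ^ 2 * f a ∂μ) * ∫ a, f a ∂μ := by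
  have hquad : ∀ l : ℝ, 0 ≤ (∫ a, f a ∂μ) * (l * l) + (-2 * ∫ a, g a * f a ∂μ) * l
      + ∫ a, g a ^ 2 * f a ∂μ := fun l => by
    have hsq : 0 ≤ ∫ a, (g a - l) ^ 2 * f a ∂μ :=
      integral_nonneg_of_ae (hf.mono fun a ha => mul_nonneg (sq_nonneg _) ha)
    calc (0 : ℝ) ≤ ∫ a, (g a - l) ^ 2 * f a ∂μ := hsq
      _ = ∫ a, ((l * l) * f a + (-2 * l) * (g a * f a) + g a ^ 2 * f a) ∂μ :=
          integral_congr_ae (ae_of_all _ fun a => by ring)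
      _ = _ := by
          rw [integral_add, integral_add, integral_const_mul, integral_const_mul]
          · ring
          exacts [hf_int.const_mul _, hgf_int.const_mul _,
            (hf_int.const_mul _).add (hgf_int.const_mul _), hg2f_int]
  have hdiscr := discrim_le_zero hquad
  rw [discrim] at hdiscr
  linarith

lemma hasDerivAt_gaussianPDFReal (μ : ℝ) (v : NNReal) (x : ℝ) :
    HasDerivAt (gaussianPDFReal μ v) (-(x - μ) / v * gaussianPDFReal μ v x) x := by
  have hexp : HasDerivAt (fun t => -(t - μ) ^ 2 / (2 * v)) (-(x - μ) / v) x := by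
    refine ((((hasDerivAt_id' x).sub_const μ).fun_pow 2).fun_neg.div_const _).congr_deriv ?_
    rw [← mul_div_mul_left _ _ (two_ne_zero (α := ℝ))]
    ring
  rw [gaussianPDFReal_def]
  exact (hexp.exp.const_mul _).congr_deriv (by ring)

local notation "φ" => gaussianPDFReal 0 1

lemma gaussianPDFReal_zero_one (x : ℝ) :
    φ x = Real.exp (-x ^ 2 / 2) / Real.sqrt (2 * Real.pi) := by
  simp [gaussianPDFReal, div_eq_inv_mul]

lemma hasDerivAt_stdPDF (x : ℝ) : HasDerivAt φ (-x * φ x) x := by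
  simpa using hasDerivAt_gaussianPDFReal 0 1 x

lemma integrable_pow_mul_stdPDF (k : ℕ) : Integrable fun t => t ^ k * φ t := by
  refine ((integrable_rpow_mul_exp_neg_mul_sq (b := 1 / 2) (by norm_num)
    (s := k) (by linarith [k.cast_nonneg (α := ℝ)])).div_const (Real.sqrt (2 * Real.pi))).congr
    (ae_of_all _ fun t => ?_)
  dsimp only
  rw [Real.rpow_natCast, gaussianPDFReal_zero_one, mul_div_assoc]
  ring_nf

lemma integrable_mul_stdPDF : Integrable fun t => t * φ t := by
  simpa using integrable_pow_mul_stdPDF 1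

lemma hasDerivAt_pow_mul_stdPDF (k : ℕ) (t : ℝ) :
    HasDerivAt (fun t => t ^ k * φ t) (k * (t ^ (k - 1) * φ t) - t ^ (k + 1) * φ t) t :=
  ((hasDerivAt_pow k t).fun_mul (hasDerivAt_stdPDF t)).congr_deriv (by ring)

lemma integrable_deriv_pow_mul_stdPDF (k : ℕ) :
    Integrable fun t => k * (t ^ (k - 1) * φ t) - t ^ (k + 1) * φ t :=
  ((integrable_pow_mul_stdPDF _).const_mul _).sub (integrable_pow_mul_stdPDF _)

lemma tendsto_pow_mul_stdPDF_atTop (k : ℕ) : Tendsto (fun t => t ^ k * φ t) atTop (𝓝 0) :=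
  tendsto_zero_of_hasDerivAt_of_integrableOn_Ioi (a := 0)
    (fun t _ => hasDerivAt_pow_mul_stdPDF k t) (integrable_deriv_pow_mul_stdPDF k).integrableOn
    (integrable_pow_mul_stdPDF k).integrableOn

lemma setIntegral_Ioi_pow_succ_mul_stdPDF (k : ℕ) (x : ℝ) :
    ∫ t in Ioi x, t ^ (k + 1) * φ t = x ^ k * φ x + k * ∫ t in Ioi x, t ^ (k - 1) * φ t := by
  have hIBP := integral_Ioi_of_hasDerivAt_of_tendsto' (a := x)
    (fun t _ => hasDerivAt_pow_mul_stdPDF k t) (integrable_deriv_pow_mul_stdPDF k).integrableOn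
    (tendsto_pow_mul_stdPDF_atTop k)
  rw [integral_sub ((integrable_pow_mul_stdPDF _).const_mul _).integrableOn
    (integrable_pow_mul_stdPDF _).integrableOn, integral_const_mul] at hIBP
  linarith

lemma gaussTail_eq_integral (x : ℝ) : gaussTail x = ∫ t in Ioi x, φ t := by
  rw [gaussTail, stdGauss, gaussianReal_apply_eq_integral 0 one_ne_zero,
    ENNReal.toReal_ofReal (setIntegral_nonneg measurableSet_Ici
      fun t _ => gaussianPDFReal_nonneg 0 1 t), integral_Ici_eq_integral_Ioi]

lemma gaussTail_pos (x : ℝ) : 0 < gaussTail x := by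
  rw [gaussTail_eq_integral, setIntegral_pos_iff_support_of_nonneg_ae
    (ae_of_all _ fun t => gaussianPDFReal_nonneg 0 1 t)
    (integrable_gaussianPDFReal 0 1).integrableOn,
    Function.support_eq_univ fun t => (gaussianPDFReal_pos 0 1 t one_ne_zero).ne', univ_inter]
  simp

lemma hasDerivAt_gaussTail (x : ℝ) : HasDerivAt gaussTail (-φ x) x := by
  have hint : ∀ a, IntegrableOn φ (Ioi a) := fun a => (integrable_gaussianPDFReal 0 1).integrableOn
  have htail : gaussTail = fun u => gaussTail 0 - ∫ t in (0 : ℝ)..u, φ t := by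
    ext u
    rw [← intervalIntegral.integral_Ioi_sub_Ioi' (hint 0) (hint u), gaussTail_eq_integral,
      gaussTail_eq_integral, sub_sub_cancel]
  rw [htail, ← zero_sub]
  exact (hasDerivAt_const x _).sub (intervalIntegral.integral_hasDerivAt_right
    (integrable_gaussianPDFReal 0 1).intervalIntegrable
    ((stronglyMeasurable_gaussianPDFReal 0 1).stronglyMeasurableAtFilter)
    (hasDerivAt_stdPDF x).continuousAt)

lemma invMills_eq_div (x : ℝ) : invMills x = φ x / gaussTail x := by
  rw [invMills, gaussianPDFReal_zero_one, div_div]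

lemma invMills_pos (x : ℝ) : 0 < invMills x := by
  rw [invMills_eq_div]
  exact div_pos (gaussianPDFReal_pos 0 1 x one_ne_zero) (gaussTail_pos x)

lemma hasDerivAt_invMills (x : ℝ) :
    HasDerivAt invMills (invMills x ^ 2 - x * invMills x) x := by
  have hN := (gaussTail_pos x).ne'
  rw [show invMills = fun u => φ u / gaussTail u from funext invMills_eq_div]
  refine ((hasDerivAt_stdPDF x).div (hasDerivAt_gaussTail x) hN).congr_deriv ?_
  field_simp
  ring

lemma setIntegral_Ioi_mul_stdPDF (x : ℝ) : ∫ t in Ioi x, t * φ t = φ x := by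
  simpa using setIntegral_Ioi_pow_succ_mul_stdPDF 0 x

lemma setIntegral_Ioi_sq_mul_stdPDF (x : ℝ) :
    ∫ t in Ioi x, t ^ 2 * φ t = x * φ x + gaussTail x := by
  simpa [gaussTail_eq_integral] using setIntegral_Ioi_pow_succ_mul_stdPDF 1 x

lemma mul_gaussTail_le_stdPDF (x : ℝ) : x * gaussTail x ≤ φ x := by
  rw [← setIntegral_Ioi_mul_stdPDF, gaussTail_eq_integral, ← integral_const_mul]
  exact setIntegral_mono_on ((integrable_gaussianPDFReal 0 1).integrableOn.const_mul x)
    integrable_mul_stdPDF.integrableOn measurableSet_Ioi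
    fun t ht => mul_le_mul_of_nonneg_right (le_of_lt ht) (gaussianPDFReal_nonneg 0 1 t)

lemma stdPDF_sq_le (x : ℝ) : φ x ^ 2 ≤ (x * φ x + gaussTail x) * gaussTail x := by
  have hCS := sq_integral_mul_le_integral_mul_integral (μ := volume.restrict (Ioi x))
    (g := fun t => t) (ae_of_all _ (gaussianPDFReal_nonneg 0 1))
    (integrable_gaussianPDFReal 0 1).integrableOn integrable_mul_stdPDF.integrableOn
    (integrable_pow_mul_stdPDF 2).integrableOn
  rwa [setIntegral_Ioi_mul_stdPDF, setIntegral_Ioi_sq_mul_stdPDF, ← gaussTail_eq_integral] at hCS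

lemma le_invMills (x : ℝ) : x ≤ invMills x := by
  rw [invMills_eq_div, le_div_iff₀ (gaussTail_pos x)]
  exact mul_gaussTail_le_stdPDF x

lemma invMills_sq_le (x : ℝ) : invMills x ^ 2 ≤ x * invMills x + 1 := by
  have hN := gaussTail_pos x
  rw [invMills_eq_div, div_pow, div_le_iff₀ (by positivity)]
  calc φ x ^ 2 ≤ (x * φ x + gaussTail x) * gaussTail x := stdPDF_sq_le x
    _ = (x * (φ x / gaussTail x) + 1) * gaussTail x ^ 2 := by field_simp

/-- Lemma 4.4, items (iii) and (iv): the inverse Mills ratio is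
differentiable with `𝒜′(x) = 𝒜(x)² − x·𝒜(x)`, and `0 ≤ 𝒜′(x) ≤ 1` for all `x`. -/
theorem statement_13 :
    ∀ x : ℝ, HasDerivAt invMills (invMills x ^ 2 - x * invMills x) x ∧
      0 ≤ deriv invMills x ∧ deriv invMills x ≤ 1 := by
  intro x
  have hderiv := hasDerivAt_invMills x
  rw [hderiv.deriv]
  refine ⟨hderiv, ?_, by linarith [invMills_sq_le x]⟩
  calc (0 : ℝ) ≤ invMills x * (invMills x - x) :=
        mul_nonneg (invMills_pos x).le (sub_nonneg.mpr (le_invMills x))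
    _ = invMills x ^ 2 - x * invMills x := by ring
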